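/- For any λ̄ ∈ [0,1], the set D := {(d₁,d₂) ∈ ℝ² : 0 ≤ d₁ ≤ 1, 0 ≤ d₂ ≤ 1, 2d₁ + d₂ ≤ 2 + λ̄, 2d₂ + d₁ ≤ 2 + λ̄} equals the convex hull of the six points (0,0), (0,1), (λ̄,1), ((2+λ̄)/3, (2+λ̄)/3), (1,λ̄), (1,0). -/

import Mathlib

/-!
The region is an intersection of half-planes containing the six points, so it contains their
convex hull. Conversely, both the region and the six points are symmetric under swapping the
coordinates, so it suffices to treat the half `y ≤ x`. There the region is the quadrilateral
`0, (1, 0), (1, l), ((2 + l) / 3, (2 + l) / 3)`, which the diagonal `y = l * x` cuts into two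
triangles with a vertex at the origin.
-/

theorem smul_add_smul_mem_convexHull {E : Type*} [AddCommGroup E] [Module ℝ E] {s : Set E}
    {u v : E} (h0 : 0 ∈ s) (hu : u ∈ s) (hv : v ∈ s) {a b : ℝ} (ha : 0 ≤ a) (hb : 0 ≤ b)
    (hab : a + b ≤ 1) : a • u + b • v ∈ convexHull ℝ s := by
  have := (convex_convexHull ℝ s).sum_mem (t := Finset.univ) (w := ![1 - a - b, a, b])
    (z := ![0, u, v]) (fun i _ ↦ by fin_cases i <;> simp <;> linarith)
    (by simp [Fin.sum_univ_three]; ring) (fun i _ ↦ by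
      fin_cases i <;> exact subset_convexHull ℝ s ‹_›)
  simpa [Fin.sum_univ_three] using this

def dofRegion (l : ℝ) : Set (ℝ × ℝ) :=
  {p | 0 ≤ p.1 ∧ p.1 ≤ 1 ∧ 0 ≤ p.2 ∧ p.2 ≤ 1 ∧ 2 * p.1 + p.2 ≤ 2 + l ∧ 2 * p.2 + p.1 ≤ 2 + l}

def dofVertices (l : ℝ) : Set (ℝ × ℝ) :=
  {(0, 0), (0, 1), (l, 1), ((2 + l) / 3, (2 + l) / 3), (1, l), (1, 0)}

theorem convex_dofRegion (l : ℝ) : Convex ℝ (dofRegion l) := by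
  rintro ⟨x₁, y₁⟩ ⟨_, _, _, _, _, _⟩ ⟨x₂, y₂⟩ ⟨_, _, _, _, _, _⟩ a b ha hb hab
  simp only [dofRegion, Set.mem_ofPred_eq, Prod.smul_mk, Prod.mk_add_mk, smul_eq_mul]
  refine ⟨?_, ?_, ?_, ?_, ?_, ?_⟩ <;> nlinarith

theorem dofVertices_subset_dofRegion {l : ℝ} (h0 : 0 ≤ l) (h1 : l ≤ 1) :
    dofVertices l ⊆ dofRegion l := by
  simp only [dofVertices, Set.insert_subset_iff, Set.singleton_subset_iff, dofRegion,
    Set.mem_ofPred_eq]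
  refine ⟨?_, ?_, ?_, ?_, ?_, ?_⟩ <;> refine ⟨?_, ?_, ?_, ?_, ?_, ?_⟩ <;> linarith

theorem swap_mem_convexHull_dofVertices {l : ℝ} {p : ℝ × ℝ}
    (hp : p ∈ convexHull ℝ (dofVertices l)) : p.swap ∈ convexHull ℝ (dofVertices l) := by
  have hswap : Prod.swap '' dofVertices l ⊆ dofVertices l := by
    rintro _ ⟨q, hq, rfl⟩
    simp only [dofVertices, Set.mem_insert_iff, Set.mem_singleton_iff] at hq ⊢
    rcases hq with rfl | rfl | rfl | rfl | rfl | rfl <;> simp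
  have := (LinearEquiv.prodComm ℝ ℝ ℝ : ℝ × ℝ →ₗ[ℝ] ℝ × ℝ).image_convexHull (dofVertices l)
  exact convexHull_mono hswap (this ▸ Set.mem_image_of_mem _ hp)

theorem zero_mem_dofVertices (l : ℝ) : 0 ∈ dofVertices l := Set.mem_insert _ _

/- In this and the next lemma the weight divides by `l` resp. `1 - l`; when that vanishes the
triangle is degenerate and the junk value `_ / 0 = 0` is still the right weight. -/
theorem mem_convexHull_dofVertices_of_le_mul {l x y : ℝ} (hl : 0 ≤ l) (hx0 : 0 ≤ x)
    (hy0 : 0 ≤ y) (hyx : y ≤ l * x) (hx1 : x ≤ 1) : (x, y) ∈ convexHull ℝ (dofVertices l) := by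
  have hyl : y / l ≤ x := div_le_of_le_mul₀ hl hx0 (by linarith)
  have hmul : y / l * l = y := div_mul_cancel_of_imp fun hl0 ↦ by subst hl0; linarith
  have hxy : (x, y) = (x - y / l) • ((1 : ℝ), (0 : ℝ)) + (y / l) • ((1 : ℝ), l) := by
    simp [hmul]
  rw [hxy]
  exact smul_add_smul_mem_convexHull (zero_mem_dofVertices l) (by simp [dofVertices])
    (by simp [dofVertices]) (by linarith) (div_nonneg hy0 hl) (by linarith)

theorem mem_convexHull_dofVertices_of_mul_le {l x y : ℝ} (hl0 : 0 ≤ l) (hl1 : l ≤ 1)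
    (hy0 : 0 ≤ y) (hlx : l * x ≤ y) (hyx : y ≤ x) (h : 2 * x + y ≤ 2 + l) :
    (x, y) ∈ convexHull ℝ (dofVertices l) := by
  set c := (x - y) / (1 - l)
  have hc : c * (1 - l) = x - y := div_mul_cancel_of_imp fun hl : 1 - l = 0 ↦ by nlinarith
  have hs : 0 < (2 + l) / 3 := by linarith
  have hxy :
      (x, y) = c • ((1 : ℝ), l) + ((x - c) / ((2 + l) / 3)) • ((2 + l) / 3, (2 + l) / 3) := by
    simp only [Prod.smul_mk, Prod.mk_add_mk, smul_eq_mul, div_mul_cancel₀ _ hs.ne', Prod.mk.injEq]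
    constructor <;> linarith
  rw [hxy]
  refine smul_add_smul_mem_convexHull (zero_mem_dofVertices l) (by simp [dofVertices])
    (by simp [dofVertices]) (div_nonneg (by linarith) (by linarith)) (div_nonneg ?_ hs.le) ?_
  · exact sub_nonneg.mpr (div_le_of_le_mul₀ (by linarith) (by linarith) (by linarith))
  · have : (x - c) / ((2 + l) / 3) ≤ 1 - c := by
      rw [div_le_iff₀ hs]
      linarith
    linarith

theorem mem_convexHull_dofVertices_of_le {l : ℝ} (h0 : 0 ≤ l) (h1 : l ≤ 1) {p : ℝ × ℝ}
    (hp : p ∈ dofRegion l) (hle : p.2 ≤ p.1) : p ∈ convexHull ℝ (dofVertices l) := by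
  obtain ⟨x, y⟩ := p
  obtain ⟨hx0, hx1, hy0, -, h, -⟩ := hp
  rcases le_total y (l * x) with hyx | hxy
  · exact mem_convexHull_dofVertices_of_le_mul h0 hx0 hy0 hyx hx1
  · exact mem_convexHull_dofVertices_of_mul_le h0 h1 hy0 hxy hle h

theorem dof_region_eq_convexHull (l : ℝ) (h0 : 0 ≤ l) (h1 : l ≤ 1) :
    {p : ℝ × ℝ | 0 ≤ p.1 ∧ p.1 ≤ 1 ∧ 0 ≤ p.2 ∧ p.2 ≤ 1 ∧
        2 * p.1 + p.2 ≤ 2 + l ∧ 2 * p.2 + p.1 ≤ 2 + l} =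
      convexHull ℝ {((0 : ℝ), (0 : ℝ)), (0, 1), (l, 1),
        ((2 + l) / 3, (2 + l) / 3), (1, l), (1, 0)} := by
  change dofRegion l = convexHull ℝ (dofVertices l)
  refine Set.Subset.antisymm ?_
    (convexHull_min (dofVertices_subset_dofRegion h0 h1) (convex_dofRegion l))
  rintro ⟨x, y⟩ hp
  rcases le_total y x with hyx | hxy
  · exact mem_convexHull_dofVertices_of_le h0 h1 hp hyx
  · obtain ⟨hx0, hx1, hy0, hy1, hxy₁, hxy₂⟩ := hp
    exact swap_mem_convexHull_dofVertices
      (mem_convexHull_dofVertices_of_le (p := (y, x)) h0 h1 ⟨hy0, hy1, hx0, hx1, hxy₂, hxy₁⟩ hxy)
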